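/- Let G = ([n], E) be a DAG with weights w ∈ ℝ^E and weight matrix C, fix an edge j→i ∈ E, and let C' be the matrix obtained from C by setting the entry c_ij to ∞ (i.e., the weight matrix of the DAG G with the edge j→i deleted). Then Q(C) = Q(C') if and only if j→i ∉ G^♭_w. -/

import Mathlib

open scoped Classical
noncomputable section

/-- The min-plus tropical semiring `T = ℝ ∪ {∞}` with `⊕ = min` and `⊙ = +`. -/
abbrev Trop : Type := WithTop ℝ

/-- Min-plus identity matrix: `0` on the diagonal, `∞` off the diagonal. -/
def mpId {n : ℕ} : Matrix (Fin n) (Fin n) Trop := fun i j => if i = j then 0 else ⊤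

/-- Min-plus matrix product. -/
def mpMul {n : ℕ} (A B : Matrix (Fin n) (Fin n) Trop) : Matrix (Fin n) (Fin n) Trop :=
  fun i j => Finset.univ.inf fun k => A i k + B k j

/-- Entrywise minimum (tropical sum) of matrices. -/
def mpAdd {n : ℕ} (A B : Matrix (Fin n) (Fin n) Trop) : Matrix (Fin n) (Fin n) Trop :=
  fun i j => A i j ⊓ B i j

/-- Min-plus matrix power. -/
def mpPow {n : ℕ} (A : Matrix (Fin n) (Fin n) Trop) : ℕ → Matrix (Fin n) (Fin n) Trop
  | 0 => mpId
  | k + 1 => mpMul (mpPow A k) A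

/-- Kleene star `A* = I ⊕ A ⊕ A^{⊙2} ⊕ ⋯ ⊕ A^{⊙(n−1)}`. -/
def kleene {n : ℕ} (A : Matrix (Fin n) (Fin n) Trop) : Matrix (Fin n) (Fin n) Trop :=
  fun i j => (Finset.range n).inf fun k => mpPow A k i j

/-- `p` is a directed path from `j` to `i` in the digraph with edge relation `E`
(`E a b` meaning there is an edge `a → b`), recorded as its list of vertices. -/
def IsPathFrom {n : ℕ} (E : Fin n → Fin n → Prop) (j i : Fin n) (p : List (Fin n)) : Prop :=
  p.head? = some j ∧ p.getLast? = some i ∧ p.Chain' E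

/-- A digraph is acyclic if the only paths from a vertex to itself are trivial. -/
def IsDAG {n : ℕ} (E : Fin n → Fin n → Prop) : Prop :=
  ∀ (j : Fin n) (p : List (Fin n)), IsPathFrom E j j p → p.length ≤ 1

/-- `C ∈ T^{n×n}` is supported on the digraph `E` : zero diagonal, and for `i ≠ j`
the entry `c_ij` is finite exactly when `j → i` is an edge. -/
def SupportedOn {n : ℕ} (C : Matrix (Fin n) (Fin n) Trop) (E : Fin n → Fin n → Prop) : Prop :=
  (∀ i, C i i = 0) ∧ ∀ i j, i ≠ j → (C i j ≠ ⊤ ↔ E j i)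

/-- The edge weight function of a weight matrix: `cw C a b = c_{ba}` is the weight of
the edge `a → b`. -/
def cw {n : ℕ} (C : Matrix (Fin n) (Fin n) Trop) : Fin n → Fin n → ℝ :=
  fun a b => WithTop.untopD 0 (C b a)

/-- Total weight of a path (sum of the weights of its consecutive edges). -/
def pathWeight {n : ℕ} (w : Fin n → Fin n → ℝ) (p : List (Fin n)) : ℝ :=
  ((p.zip p.tail).map fun q => w q.1 q.2).sum

/-- The edge `j → i` belongs to the weighted transitive reduction `G^♭_w`:
the single edge is the unique minimum-weight directed path from `j` to `i`. -/
def InWTR {n : ℕ} (E : Fin n → Fin n → Prop) (w : Fin n → Fin n → ℝ) (j i : Fin n) : Prop :=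
  E j i ∧ ∀ p : List (Fin n), IsPathFrom E j i p → p ≠ [j, i] → w j i < pathWeight w p

/-- Weighted digraph polyhedron `Q(C) = {x : x_i − x_j ≤ c_ij}` (as the saturated
subset of `ℝ^n` representing a subset of `ℝ^n/ℝ𝟙`). -/
def wdp {n : ℕ} (C : Matrix (Fin n) (Fin n) Trop) : Set (Fin n → ℝ) :=
  {x | ∀ i j, i ≠ j → ((x i - x j : ℝ) : Trop) ≤ C i j}

/-- The tropical polyhedron generated by the columns of `V`: all min-plus linear
combinations `V ⊙ λ`, `λ ∈ ℝ^n` (as a saturated subset of `ℝ^d`). -/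
def tconvM {d n : ℕ} (V : Matrix (Fin d) (Fin n) Trop) : Set (Fin d → ℝ) :=
  {x | ∃ lam : Fin n → ℝ, ∀ i, (x i : Trop) = Finset.univ.inf fun j => V i j + (lam j : Trop)}

/-- `v` is reachable from `s`. -/
def Reaches {n : ℕ} (E : Fin n → Fin n → Prop) (s v : Fin n) : Prop :=
  ∃ p, IsPathFrom E s v p

/-- Edges of the transitive closure `G*`: `j → i` with `i ≠ j` reachable from `j`. -/
def EStar {n : ℕ} (E : Fin n → Fin n → Prop) (j i : Fin n) : Prop :=
  j ≠ i ∧ ∃ p, IsPathFrom E j i p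

/-- The matrix obtained from `C` by setting the entry `c_ij` to `∞` (deleting the
edge `j → i`). -/
def delEdge {n : ℕ} (C : Matrix (Fin n) (Fin n) Trop) (i j : Fin n) :
    Matrix (Fin n) (Fin n) Trop :=
  fun a b => if a = i ∧ b = j then ⊤ else C a b

/-!
`Q(C) ⊆ Q(C')` always, so the two agree iff the constraint `x_i - x_j ≤ c_ij` is implied by
the others. If some path `p ≠ [j, i]` from `j` to `i` weighs at most `c_ij`, then `p` avoids the
edge `j → i` (paths in a DAG repeat no vertex) and telescoping along `p` gives the implication.
If instead every such path is strictly heavier, take the shortest-path potential of `G` minus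
`j → i` with sources `j` (offset `0`) and all other vertices (a large offset): it satisfies every
remaining constraint, yet `x_i - x_j > c_ij`.
-/

variable {n : ℕ}

def delEdgeRel (E : Fin n → Fin n → Prop) (j i : Fin n) : Fin n → Fin n → Prop :=
  fun a b => E a b ∧ ¬(a = j ∧ b = i)

namespace IsPathFrom

variable {E : Fin n → Fin n → Prop} {a b c : Fin n} {p : List (Fin n)}

lemma ne_nil (h : IsPathFrom E a b p) : p ≠ [] := by
  rintro rfl
  simp [IsPathFrom] at h

lemma singleton (E : Fin n → Fin n → Prop) (a : Fin n) : IsPathFrom E a a [a] :=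
  ⟨rfl, rfl, List.isChain_singleton a⟩

lemma concat (h : IsPathFrom E a b p) (hbc : E b c) : IsPathFrom E a c (p ++ [c]) := by
  obtain ⟨hhead, hlast, hchain⟩ := h
  refine ⟨by rw [List.head?_append_of_ne_nil _ (ne_nil ⟨hhead, hlast, hchain⟩), hhead],
    List.getLast?_concat, List.isChain_append.2 ⟨hchain, List.isChain_singleton c, ?_⟩⟩
  simp_all

lemma imp {E' : Fin n → Fin n → Prop} (h : IsPathFrom E a b p)
    (hE : ∀ ⦃u v⦄, E u v → E' u v) : IsPathFrom E' a b p :=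
  ⟨h.1, h.2.1, List.IsChain.imp hE h.2.2⟩

end IsPathFrom

namespace IsDAG

variable {E : Fin n → Fin n → Prop} {a b : Fin n} {p : List (Fin n)}

lemma ne_of_edge (hE : IsDAG E) (hab : E a b) : a ≠ b := by
  rintro rfl
  simpa using hE a [a, a] ⟨rfl, rfl, List.isChain_pair.2 hab⟩

lemma mono {E' : Fin n → Fin n → Prop} (hE : IsDAG E) (h : ∀ ⦃u v⦄, E' u v → E u v) :
    IsDAG E' :=
  fun a p hp => hE a p (hp.imp h)

lemma nodup (hE : IsDAG E) (hp : p.IsChain E) : p.Nodup := by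
  induction p with
  | nil => exact List.nodup_nil
  | cons a l ih =>
    refine List.nodup_cons.2 ⟨fun ha => ?_, ih hp.tail⟩
    obtain ⟨s, t, rfl⟩ := List.mem_iff_append.1 ha
    have hcycle : IsPathFrom E a a ((a :: s) ++ [a]) :=
      ⟨rfl, List.getLast?_concat, hp.prefix ⟨t, by simp⟩⟩
    simpa using hE a _ hcycle

lemma finite_chains (hE : IsDAG E) : {p : List (Fin n) | p.IsChain E}.Finite :=
  (List.finite_length_le (Fin n) n).subset fun _ hp => by
    simpa using (hE.nodup hp).length_le_card

lemma exists_le_pathWeight (hE : IsDAG E) (w : Fin n → Fin n → ℝ) :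
    ∃ L, ∀ p : List (Fin n), p.IsChain E → L ≤ pathWeight w p := by
  obtain ⟨L, hL⟩ := (hE.finite_chains.image (pathWeight w)).bddBelow
  exact ⟨L, fun p hp => hL ⟨p, hp, rfl⟩⟩

lemma isChain_delEdgeRel (hE : IsDAG E) (hp : IsPathFrom E a b p) (hne : p ≠ [a, b]) :
    p.IsChain (delEdgeRel E a b) := by
  obtain ⟨hhead, hlast, hchain⟩ := hp
  have hnodup := hE.nodup hchain
  refine List.isChain_iff_forall_rel_of_append_cons_cons.2 fun u v l₁ l₂ hsplit => ?_
  refine ⟨List.isChain_iff_forall_rel_of_append_cons_cons.1 hchain hsplit, ?_⟩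
  rintro ⟨rfl, rfl⟩
  subst hsplit
  -- `p` is duplicate-free, so `u` can only occur at its head and `v` only at its end
  obtain rfl : l₁ = [] := by
    rcases l₁ with _ | ⟨c, l₁⟩
    · rfl
    · obtain rfl : c = u := by simpa using hhead
      simp at hnodup
  obtain rfl : l₂ = [] := by
    rcases List.eq_nil_or_concat l₂ with rfl | ⟨l₂, c, rfl⟩
    · rfl
    · obtain rfl : c = v := by
        rw [List.nil_append, List.concat_eq_append, ← List.cons_append, ← List.cons_append,
          List.getLast?_concat] at hlast
        exact Option.some_injective _ hlast
      simp at hnodup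
  exact hne rfl

end IsDAG

lemma pathWeight_cons_cons (w : Fin n → Fin n → ℝ) (a b : Fin n) (l : List (Fin n)) :
    pathWeight w (a :: b :: l) = w a b + pathWeight w (b :: l) := by
  simp [pathWeight]

lemma pathWeight_concat (w : Fin n → Fin n → ℝ) {a : Fin n} {p : List (Fin n)}
    (hp : p.getLast? = some a) (b : Fin n) :
    pathWeight w (p ++ [b]) = pathWeight w p + w a b := by
  induction p with
  | nil => simp at hp
  | cons c l ih =>
    rcases l with _ | ⟨d, l⟩
    · obtain rfl : c = a := by simpa using hp
      simp [pathWeight]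
    · rw [List.getLast?_cons_cons] at hp
      rw [List.cons_append, List.cons_append, pathWeight_cons_cons, pathWeight_cons_cons,
        ← List.cons_append, ih hp, add_assoc]

lemma sub_le_pathWeight (x : Fin n → ℝ) (w : Fin n → Fin n → ℝ) {a b : Fin n}
    {p : List (Fin n)} (hp : IsPathFrom (fun u v => x v - x u ≤ w u v) a b p) :
    x b - x a ≤ pathWeight w p := by
  induction p generalizing a with
  | nil => exact absurd rfl hp.ne_nil
  | cons c l ih =>
    obtain ⟨hhead, hlast, hchain⟩ := hp
    obtain rfl : c = a := by simpa using hhead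
    rcases l with _ | ⟨d, l⟩
    · obtain rfl : c = b := by simpa using hlast
      simp [pathWeight]
    · replace hchain := List.isChain_cons_cons.1 hchain
      have := ih ⟨rfl, by simpa using hlast, hchain.2⟩
      rw [pathWeight_cons_cons]
      linarith [hchain.1]

/-- The witness is the shortest-path potential: `x v` is the least value of
`f u + pathWeight w p` over the paths `p` from some `u` to `v`. -/
theorem IsDAG.exists_potential {E : Fin n → Fin n → Prop} (hE : IsDAG E)
    (w : Fin n → Fin n → ℝ) (f : Fin n → ℝ) :
    ∃ x : Fin n → ℝ, (∀ a b, E a b → x b - x a ≤ w a b) ∧ (∀ v, x v ≤ f v) ∧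
      ∀ v, ∃ u p, IsPathFrom E u v p ∧ x v = f u + pathWeight w p := by
  set S : Fin n → Set ℝ := fun v =>
    ⋃ u, (fun p => f u + pathWeight w p) '' {p | IsPathFrom E u v p}
  have hmem : ∀ {u v p}, IsPathFrom E u v p → f u + pathWeight w p ∈ S v :=
    fun {u} _ p hp => Set.mem_iUnion.2 ⟨u, p, hp, rfl⟩
  have hfin : ∀ v, (S v).Finite := fun v =>
    Set.finite_iUnion fun _ => (hE.finite_chains.subset fun _ hp => hp.2.2).image _
  have hle : ∀ v, ∀ t ∈ S v, sInf (S v) ≤ t := fun v _ ht => csInf_le (hfin v).bddBelow ht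
  have hinf : ∀ v, sInf (S v) ∈ S v := fun v =>
    Set.Nonempty.csInf_mem ⟨_, hmem (IsPathFrom.singleton E v)⟩ (hfin v)
  refine ⟨fun v => sInf (S v), fun a b hab => ?_, fun v => ?_, fun v => ?_⟩
  · obtain ⟨u, p, hp, hpa⟩ := Set.mem_iUnion.1 (hinf a)
    have := hle b _ (hmem (IsPathFrom.concat hp hab))
    rw [pathWeight_concat w hp.2.1] at this
    simp only at hpa ⊢
    linarith
  · simpa [pathWeight] using hle v _ (hmem (IsPathFrom.singleton E v))
  · obtain ⟨u, p, hp, hpv⟩ := Set.mem_iUnion.1 (hinf v)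
    exact ⟨u, p, hp, hpv.symm⟩

section WeightedDigraphPolyhedron

variable {E : Fin n → Fin n → Prop} {C : Matrix (Fin n) (Fin n) Trop} {i j : Fin n}

lemma coe_le_iff_le_cw (hsupp : SupportedOn C E) {a b : Fin n} (hab : a ≠ b) (he : E b a)
    (r : ℝ) : (r : Trop) ≤ C a b ↔ r ≤ cw C b a :=
  (WithTop.le_untopD_iff fun htop => absurd htop ((hsupp.2 a b hab).2 he)).symm

lemma mem_wdp_delEdge_iff (hsupp : SupportedOn C E) (x : Fin n → ℝ) :
    x ∈ wdp (delEdge C i j) ↔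
      ∀ a b, a ≠ b → delEdgeRel E j i a b → x b - x a ≤ cw C a b := by
  constructor
  · rintro hx a b hab ⟨he, hne⟩
    have := hx b a hab.symm
    rw [delEdge, if_neg fun h => hne ⟨h.2, h.1⟩] at this
    exact (coe_le_iff_le_cw hsupp hab.symm he _).1 this
  · intro hx a b hab
    rw [delEdge]
    split_ifs with hdel
    · exact le_top
    by_cases htop : C a b = ⊤
    · exact htop ▸ le_top
    have he : E b a := (hsupp.2 a b hab).1 htop
    exact (coe_le_iff_le_cw hsupp hab he _).2
      (hx b a hab.symm ⟨he, fun h => hdel ⟨h.2, h.1⟩⟩)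

lemma wdp_mono {D : Matrix (Fin n) (Fin n) Trop} (h : ∀ a b, C a b ≤ D a b) :
    wdp C ⊆ wdp D :=
  fun _ hx a b hab => (hx a b hab).trans (h a b)

lemma wdp_eq_wdp_delEdge_iff (hij : i ≠ j) :
    wdp C = wdp (delEdge C i j) ↔
      ∀ x ∈ wdp (delEdge C i j), ((x i - x j : ℝ) : Trop) ≤ C i j := by
  have hle : ∀ a b, C a b ≤ delEdge C i j a b := fun a b => by
    rw [delEdge]; split_ifs <;> simp
  refine ⟨fun h x hx => ?_, fun h => (wdp_mono hle).antisymm fun x hx a b hab => ?_⟩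
  · exact (h ▸ hx : x ∈ wdp C) i j hij
  · by_cases hdel : a = i ∧ b = j
    · obtain ⟨rfl, rfl⟩ := hdel
      exact h x hx
    · simpa [delEdge, hdel] using hx a b hab

lemma sub_le_pathWeight_of_mem_wdp_delEdge (hdag : IsDAG E) (hsupp : SupportedOn C E)
    {x : Fin n → ℝ} (hx : x ∈ wdp (delEdge C i j)) {p : List (Fin n)}
    (hp : IsPathFrom E j i p) (hne : p ≠ [j, i]) :
    x i - x j ≤ pathWeight (cw C) p :=
  sub_le_pathWeight x (cw C) ⟨hp.1, hp.2.1, (hdag.isChain_delEdgeRel hp hne).imp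
    fun u v huv => (mem_wdp_delEdge_iff hsupp x).1 hx u v (hdag.ne_of_edge huv.1) huv⟩

lemma exists_mem_wdp_delEdge_of_inWTR (hdag : IsDAG E) (hsupp : SupportedOn C E)
    (hwtr : InWTR E (cw C) j i) :
    ∃ x ∈ wdp (delEdge C i j), cw C j i < x i - x j := by
  have hdag' : IsDAG (delEdgeRel E j i) := hdag.mono fun _ _ h => h.1
  obtain ⟨L, hL⟩ := hdag'.exists_le_pathWeight (cw C)
  -- sources other than `j` start so high that no path from them can violate the bound at `i`
  obtain ⟨x, hedge, hsrc, hpath⟩ := hdag'.exists_potential (cw C)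
    fun u => if u = j then 0 else cw C j i - L + 1
  refine ⟨x, (mem_wdp_delEdge_iff hsupp x).2 fun a b _ hab => hedge a b hab, ?_⟩
  have hxj : x j ≤ 0 := by simpa using hsrc j
  obtain ⟨u, p, hp, hxi⟩ := hpath i
  by_cases hu : u = j
  · rw [if_pos hu, zero_add] at hxi
    subst hu
    have hne : p ≠ [u, i] := by
      rintro rfl
      exact (List.isChain_pair.1 hp.2.2).2 ⟨rfl, rfl⟩
    have := hwtr.2 p (hp.imp fun _ _ h => h.1) hne
    linarith
  · have := hL p hp.2.2
    rw [if_neg hu] at hxi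
    linarith

end WeightedDigraphPolyhedron

/-- For an edge `j → i` of a weighted DAG `(G, w)` with weight matrix
`C`, letting `C'` be `C` with entry `c_ij` set to `∞`, one has `Q(C) = Q(C')` iff
`j → i ∉ G^♭_w`. -/
theorem stmt5 {n : ℕ} (E : Fin n → Fin n → Prop) (C : Matrix (Fin n) (Fin n) Trop)
    (hdag : IsDAG E) (hsupp : SupportedOn C E) (i j : Fin n) (he : E j i) :
    wdp C = wdp (delEdge C i j) ↔ ¬ InWTR E (cw C) j i := by
  have hij : i ≠ j := (hdag.ne_of_edge he).symm
  rw [wdp_eq_wdp_delEdge_iff hij]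
  constructor
  · intro hQ hwtr
    obtain ⟨x, hx, hlt⟩ := exists_mem_wdp_delEdge_of_inWTR hdag hsupp hwtr
    exact hlt.not_ge ((coe_le_iff_le_cw hsupp hij he _).1 (hQ x hx))
  · intro hwtr x hx
    obtain ⟨p, hp, hne, hpw⟩ :
        ∃ p, IsPathFrom E j i p ∧ p ≠ [j, i] ∧ pathWeight (cw C) p ≤ cw C j i := by
      simpa [InWTR, he] using hwtr
    exact (coe_le_iff_le_cw hsupp hij he _).2
      ((sub_le_pathWeight_of_mem_wdp_delEdge hdag hsupp hx hp hne).trans hpw)
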